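/- Let M ∈ ℝ^{m×k} have full column rank k with singular values σ₁ ≥ … ≥ σ_k > 0. Then for all σ, α ≥ 0, the spectral norm of the difference of regularized pseudoinverses is given exactly by ‖[(MᵀM + σ² I)⁻¹ − (MᵀM + α² I)⁻¹] Mᵀ‖ = max_{1 ≤ i ≤ k} σ_i |σ² − α²| / ((σ_i² + σ²)(σ_i² + α²)). -/

import Mathlib

/-! With the singular value decomposition `M = E diag(s) Vᵀ`, both regularised Gram matrices
`MᵀM + t²I = V diag(s² + t²) Vᵀ` are diagonalised by `V`, so the matrix in question is
`V diag(f) Eᵀ` with `f i = s i ((s i² + σ²)⁻¹ - (s i² + α²)⁻¹)`. By the C*-identity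
`‖AᴴA‖ = ‖A‖²`, multiplying by a matrix with orthonormal columns preserves the spectral norm,
and the spectral norm of `diag(f)` is `max |f i|`. -/

open Matrix

/-- The spectral (ℓ² operator) norm of a real matrix. -/
noncomputable def specNorm {a b : ℕ} (M : Matrix (Fin a) (Fin b) ℝ) : ℝ :=
  ‖LinearMap.toContinuousLinearMap (Matrix.toEuclideanLin M)‖

open scoped Matrix.Norms.L2Operator

lemma pi_norm_eq_iSup_norm {ι E : Type*} [Fintype ι] [SeminormedAddCommGroup E] (f : ι → E) :
    ‖f‖ = ⨆ i, ‖f i‖ :=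
  le_antisymm
    ((pi_norm_le_iff_of_nonneg (Real.iSup_nonneg fun _ ↦ norm_nonneg _)).2 fun i ↦
      le_ciSup (f := fun i ↦ ‖f i‖) (Set.finite_range _).bddAbove i)
    (Real.iSup_le (norm_le_pi_norm f) (norm_nonneg f))

namespace Matrix

variable {𝕜 : Type*} [RCLike 𝕜] {l m n : Type*} [Fintype l] [Fintype m] [Fintype n]
  [DecidableEq l] [DecidableEq n]

lemma l2_opNorm_mul_of_conjTranspose_mul_self_eq_one {U : Matrix m n 𝕜} (hU : Uᴴ * U = 1)
    (A : Matrix n l 𝕜) : ‖U * A‖ = ‖A‖ := by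
  have h := l2_opNorm_conjTranspose_mul_self (U * A)
  rw [conjTranspose_mul, Matrix.mul_assoc, ← Matrix.mul_assoc Uᴴ, hU, Matrix.one_mul,
    l2_opNorm_conjTranspose_mul_self] at h
  exact (mul_self_inj (norm_nonneg _) (norm_nonneg _)).1 h.symm

lemma l2_opNorm_mul_conjTranspose_of_conjTranspose_mul_self_eq_one [DecidableEq m]
    {W : Matrix l n 𝕜} (hW : Wᴴ * W = 1) (A : Matrix m n 𝕜) : ‖A * Wᴴ‖ = ‖A‖ := by
  rw [← l2_opNorm_conjTranspose, conjTranspose_mul, conjTranspose_conjTranspose,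
    l2_opNorm_mul_of_conjTranspose_mul_self_eq_one hW, l2_opNorm_conjTranspose]

lemma l2_opNorm_mul_diagonal_mul_conjTranspose [DecidableEq m] {U : Matrix m n 𝕜}
    {W : Matrix l n 𝕜} (hU : Uᴴ * U = 1) (hW : Wᴴ * W = 1) (d : n → 𝕜) :
    ‖U * diagonal d * Wᴴ‖ = ‖d‖ := by
  rw [l2_opNorm_mul_conjTranspose_of_conjTranspose_mul_self_eq_one hW,
    l2_opNorm_mul_of_conjTranspose_mul_self_eq_one hU, l2_opNorm_diagonal]

end Matrix

lemma specNorm_eq_l2_opNorm {a b : ℕ} (A : Matrix (Fin a) (Fin b) ℝ) : specNorm A = ‖A‖ := rfl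

namespace Matrix

variable {K : Type*} [Field K] {m n : Type*} [Fintype n] [DecidableEq n]

lemma transpose_mul_self_of_eq_mul_diagonal_mul_transpose [Fintype m] {M E : Matrix m n K}
    {V : Matrix n n K} {s : n → K} (hE : Eᵀ * E = 1) (hM : M = E * diagonal s * Vᵀ) :
    Mᵀ * M = V * diagonal (fun i ↦ s i ^ 2) * Vᵀ := by
  subst hM
  simp only [transpose_mul, transpose_transpose, diagonal_transpose, Matrix.mul_assoc]
  rw [← Matrix.mul_assoc Eᵀ, hE, Matrix.one_mul, ← Matrix.mul_assoc (diagonal s),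
    diagonal_mul_diagonal]
  simp only [sq]

lemma mul_diagonal_mul_transpose_add_smul_one {V : Matrix n n K} (hV : Vᵀ * V = 1) (d : n → K)
    (c : K) : V * diagonal d * Vᵀ + c • 1 = V * diagonal (fun i ↦ d i + c) * Vᵀ := by
  rw [← diagonal_add, ← smul_one_eq_diagonal, Matrix.mul_add, Matrix.add_mul, Matrix.mul_smul,
    Matrix.smul_mul, Matrix.mul_one,
    mul_eq_one_comm.mp hV]

lemma inv_mul_diagonal_mul_transpose {V : Matrix n n K} (hV : Vᵀ * V = 1) {d : n → K}
    (hd : ∀ i, d i ≠ 0) : (V * diagonal d * Vᵀ)⁻¹ = V * diagonal d⁻¹ * Vᵀ := by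
  refine inv_eq_right_inv ?_
  calc V * diagonal d * Vᵀ * (V * diagonal d⁻¹ * Vᵀ)
      = V * (diagonal d * (Vᵀ * V) * diagonal d⁻¹) * Vᵀ := by simp only [Matrix.mul_assoc]
    _ = 1 := by
      have hdd : (fun i ↦ d i * d⁻¹ i) = fun _ ↦ 1 := funext fun i ↦ mul_inv_cancel₀ (hd i)
      rw [hV, Matrix.mul_one, diagonal_mul_diagonal, hdd, diagonal_one, Matrix.mul_one,
        mul_eq_one_comm.mp hV]

lemma mul_diagonal_mul_transpose_mul_mul_diagonal_mul {V : Matrix n n K} (hV : Vᵀ * V = 1)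
    (a b : n → K) (W : Matrix n m K) :
    V * diagonal a * Vᵀ * (V * diagonal b * W) = V * diagonal (a * b) * W := by
  calc V * diagonal a * Vᵀ * (V * diagonal b * W)
      = V * (diagonal a * (Vᵀ * V) * diagonal b) * W := by simp only [Matrix.mul_assoc]
    _ = V * diagonal (a * b) * W := by rw [hV, Matrix.mul_one, diagonal_mul_diagonal]; rfl

end Matrix

theorem stmt18_general {m k : ℕ} (M : Matrix (Fin m) (Fin k) ℝ)
    (E : Matrix (Fin m) (Fin k) ℝ) (V : Matrix (Fin k) (Fin k) ℝ) (s : Fin k → ℝ)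
    (hE : Eᵀ * E = 1) (hV : Vᵀ * V = 1) (hs : ∀ i, 0 < s i)
    (hsvd : M = E * Matrix.diagonal s * Vᵀ)
    (σ α : ℝ) :
    specNorm (((Mᵀ * M + σ^2 • (1 : Matrix (Fin k) (Fin k) ℝ))⁻¹
          - (Mᵀ * M + α^2 • (1 : Matrix (Fin k) (Fin k) ℝ))⁻¹) * Mᵀ)
      = ⨆ i : Fin k, s i * |σ^2 - α^2| / ((s i ^ 2 + σ^2) * (s i ^ 2 + α^2)) := by
  have hMt : Mᵀ = V * diagonal s * Eᵀ := by
    simp [hsvd, transpose_mul, Matrix.mul_assoc]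
  have hpos (t : ℝ) (i : Fin k) : 0 < s i ^ 2 + t ^ 2 := by have := hs i; positivity
  have hreg (t : ℝ) : (Mᵀ * M + t ^ 2 • (1 : Matrix (Fin k) (Fin k) ℝ))⁻¹
      = V * diagonal (fun i ↦ s i ^ 2 + t ^ 2)⁻¹ * Vᵀ := by
    rw [transpose_mul_self_of_eq_mul_diagonal_mul_transpose hE hsvd,
      mul_diagonal_mul_transpose_add_smul_one hV, inv_mul_diagonal_mul_transpose hV]
    exact fun i ↦ (hpos t i).ne'
  rw [specNorm_eq_l2_opNorm, hreg, hreg, hMt, ← Matrix.sub_mul, ← Matrix.mul_sub, diagonal_sub,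
    mul_diagonal_mul_transpose_mul_mul_diagonal_mul hV, ← conjTranspose_eq_transpose_of_trivial,
    l2_opNorm_mul_diagonal_mul_conjTranspose hV hE, pi_norm_eq_iSup_norm]
  refine iSup_congr fun i ↦ ?_
  simp only [Pi.mul_apply, Pi.inv_apply, Real.norm_eq_abs]
  rw [inv_sub_inv (hpos σ i).ne' (hpos α i).ne', add_sub_add_left_eq_sub, abs_mul, abs_div,
    abs_of_pos (hs i), abs_of_pos (mul_pos (hpos σ i) (hpos α i)), abs_sub_comm]
  ring

/-- **Exact spectral norm of the difference of regularized pseudoinverses.**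
Let `M ∈ ℝ^{m×k}` have full column rank `k`, with singular value decomposition
`M = E diag(s) Vᵀ` (`E` with orthonormal columns, `V` orthogonal, `s i > 0`).
Then for all `σ, α ≥ 0`,
`‖[(MᵀM + σ²I)⁻¹ − (MᵀM + α²I)⁻¹]Mᵀ‖
  = max_i s_i |σ² − α²| / ((s_i² + σ²)(s_i² + α²))`. -/
theorem stmt18 {m k : ℕ} (hk : 0 < k) (M : Matrix (Fin m) (Fin k) ℝ)
    (E : Matrix (Fin m) (Fin k) ℝ) (V : Matrix (Fin k) (Fin k) ℝ) (s : Fin k → ℝ)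
    (hE : Eᵀ * E = 1) (hV : Vᵀ * V = 1) (hs : ∀ i, 0 < s i)
    (hsvd : M = E * Matrix.diagonal s * Vᵀ)
    (σ α : ℝ) (hσ : 0 ≤ σ) (hα : 0 ≤ α) :
    specNorm (((Mᵀ * M + σ^2 • (1 : Matrix (Fin k) (Fin k) ℝ))⁻¹
          - (Mᵀ * M + α^2 • (1 : Matrix (Fin k) (Fin k) ℝ))⁻¹) * Mᵀ)
      = ⨆ i : Fin k, s i * |σ^2 - α^2| / ((s i ^ 2 + σ^2) * (s i ^ 2 + α^2)) :=
  stmt18_general M E V s hE hV hs hsvd σ α
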